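/- arXiv:1909.02332 — 7 statements merged into one kernel-verified Lean document; each statement's English description precedes it below -/
import Mathlib

section
/- Let S = {(a₁,a₂,b₁,b₂,c₁,c₂) ∈ ℤ⁶ : gcd(a₁,a₂) = gcd(b₁,b₂) = gcd(c₁,c₂) = 1} and define Δ(a₁,a₂,b₁,b₂,c₁,c₂) = (b₁c₁+b₁c₂+b₂c₂, a₁c₁+a₂c₁+a₂c₂, a₁b₁+a₁b₂+a₂b₂). For t ∈ ℤ define Γ_t(a₁,a₂,b₁,b₂,c₁,c₂) = (a₁t − a₂, a₁(1−t) + a₂, −b₂, b₁ + b₂(t+1), c₁t + c₂(t−1), c₁ + c₂). Then for every x ∈ S and every t ∈ ℤ, Γ_t(x) ∈ S and Δ(x) = Δ(Γ_t(x)). -/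
/-!
Each of the three pairs of `Γ_t` is the image of the corresponding pair of the input under an
integer matrix of determinant one, so coprimality is preserved: a Bézout identity for the old
pair, multiplied by the adjugate, is one for the new pair. The invariance of `Δ` is a polynomial
identity.
-/

/-- The map Δ on coprime tuples. -/
def Delta (a₁ a₂ b₁ b₂ c₁ c₂ : ℤ) : ℤ × ℤ × ℤ :=
  (b₁*c₁ + b₁*c₂ + b₂*c₂, a₁*c₁ + a₂*c₁ + a₂*c₂, a₁*b₁ + a₁*b₂ + a₂*b₂)

theorem IsCoprime.of_det_eq_one {R : Type*} [CommRing R] {x y x' y' p q r s : R}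
    (h : IsCoprime x y) (hdet : p * s - q * r = 1)
    (hx' : x' = p * x + q * y) (hy' : y' = r * x + s * y) : IsCoprime x' y' := by
  obtain ⟨u, v, huv⟩ := h
  exact ⟨u * s - v * r, v * p - u * q, by
    rw [hx', hy']; linear_combination (u * x + v * y) * hdet + huv⟩

/-- Γ_t preserves membership in S and the value of Δ. -/
theorem stmt_4 (a₁ a₂ b₁ b₂ c₁ c₂ t : ℤ)
    (ha : Int.gcd a₁ a₂ = 1) (hb : Int.gcd b₁ b₂ = 1) (hc : Int.gcd c₁ c₂ = 1) :
    Int.gcd (a₁*t - a₂) (a₁*(1-t) + a₂) = 1 ∧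
    Int.gcd (-b₂) (b₁ + b₂*(t+1)) = 1 ∧
    Int.gcd (c₁*t + c₂*(t-1)) (c₁ + c₂) = 1 ∧
    Delta (a₁*t - a₂) (a₁*(1-t) + a₂) (-b₂) (b₁ + b₂*(t+1))
        (c₁*t + c₂*(t-1)) (c₁ + c₂) = Delta a₁ a₂ b₁ b₂ c₁ c₂ := by
  simp only [← Int.isCoprime_iff_gcd_eq_one] at ha hb hc ⊢
  refine ⟨?_, ?_, ?_, ?_⟩
  · exact ha.of_det_eq_one (p := t) (q := -1) (r := 1 - t) (s := 1) (by ring) (by ring) (by ring)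
  · exact hb.of_det_eq_one (p := 0) (q := -1) (r := 1) (s := t + 1) (by ring) (by ring) (by ring)
  · exact hc.of_det_eq_one (p := t) (q := t - 1) (r := 1) (s := 1) (by ring) (by ring) (by ring)
  · simp only [Delta, Prod.mk.injEq]
    exact ⟨by ring, by ring, by ring⟩
end

section
/- Let a, b, c be positive integers with gcd(a,b) = gcd(b,c) = gcd(a,c), and suppose that either all three 2-adic valuations ν₂(a), ν₂(b), ν₂(c) are zero, or they are not all equal. Then there exist integers a₁, b₂ such that a₁·a + b·b₂ = c and gcd(a₁, b) = 1 and gcd(a, b₂) = 1. -/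
/-! Write `a = d A`, `b = d B`, `c = d C` with `d` the common gcd, so that `A, B, C` are
pairwise coprime. If `A x + B y = 1`, the solutions of `a₁ A + B b₂ = C` are `a₁ = C x + k B`,
`b₂ = C y - k A`, and `a₁ A ≡ C (mod B)`, `B b₂ ≡ C (mod A)` already make `a₁` prime to `B`
and `b₂` prime to `A`. It remains to choose `k` so that no prime `p ∣ d` divides `a₁` or `b₂`.
Each of the two conditions excludes at most one residue of `k` mod `p`, so an odd `p` leaves a
residue free; for `p = 2` the valuation hypothesis forces `2 ∣ A B C`, and then a suitable
parity exists. The Chinese remainder theorem glues the residues together. -/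

theorem exists_add_mul_ne_zero_and_sub_mul_ne_zero {F : Type*} [Field F] {A B C x y : F}
    (hxy : A * x + B * y = 1) (hA : A = 0 → C ≠ 0) (hB : B = 0 → C ≠ 0)
    (h2 : (2 : F) ≠ 0 ∨ A * B * C = 0) :
    ∃ k : F, C * x + k * B ≠ 0 ∧ C * y - k * A ≠ 0 := by
  have key (k : F) : (C * x + k * B) * A + B * (C * y - k * A) = C := by
    linear_combination C * hxy
  by_cases hB0 : B = 0
  · have hC := hB hB0
    have hAx : A * x = 1 := by simpa [hB0] using hxy
    have hA0 : A ≠ 0 := left_ne_zero_of_mul_eq_one hAx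
    refine ⟨(C * y - 1) / A, ?_, ?_⟩
    · simpa [hB0, hC] using right_ne_zero_of_mul_eq_one hAx
    · field_simp
      simp
  -- `t` is the value of `C * x + k * B`; then `B * (C * y - k * A) = C - t * A`
  obtain ⟨t, ht0, htA⟩ : ∃ t : F, t ≠ 0 ∧ t * A ≠ C := by
    by_cases hA0 : A = 0
    · exact ⟨1, one_ne_zero, by simpa [hA0, eq_comm] using hA hA0⟩
    by_cases hC0 : C = 0
    · exact ⟨1, one_ne_zero, by simpa [hC0]⟩
    have h2' : (2 : F) ≠ 0 := h2.resolve_right (by simp [hA0, hB0, hC0])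
    refine ⟨2 * C / A, by simp [h2', hC0, hA0], ?_⟩
    field_simp
    intro h
    exact hC0 (by linear_combination h)
  refine ⟨(t - C * x) / B, by field_simp; simpa, fun h => htA ?_⟩
  have := key ((t - C * x) / B)
  rw [h, div_mul_cancel₀ _ hB0] at this
  linear_combination this

theorem exists_intCast_forall_of_pairwise_coprime {S : Finset ℕ} (hS0 : ∀ n ∈ S, n ≠ 0)
    (hS : (S : Set ℕ).Pairwise Nat.Coprime) (P : ∀ n : ℕ, ZMod n → Prop)
    (h : ∀ n ∈ S, ∃ r, P n r) : ∃ k : ℤ, ∀ n ∈ S, P n k := by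
  choose! r hr using h
  obtain ⟨k, hk⟩ := Nat.chineseRemainderOfFinset (fun n => (r n).val) id S hS0 hS
  refine ⟨k, fun n hn => ?_⟩
  have : NeZero n := ⟨hS0 n hn⟩
  rw [Int.cast_natCast, (ZMod.natCast_eq_natCast_iff _ _ _).2 (hk n hn), ZMod.natCast_zmod_val]
  exact hr n hn

theorem Int.isCoprime_of_forall_mem_primeFactors {z : ℤ} {n : ℕ} (hn : n ≠ 0)
    (h : ∀ p ∈ n.primeFactors, (z : ZMod p) ≠ 0) : IsCoprime z n := by
  rw [Int.isCoprime_iff_gcd_eq_one, Int.gcd_eq_natAbs, Int.natAbs_natCast]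
  refine Nat.coprime_of_dvd fun p hp hpz hpn => h p (Nat.mem_primeFactors.2 ⟨hp, hpn, hn⟩) ?_
  rwa [ZMod.intCast_zmod_eq_zero_iff_dvd, Int.natCast_dvd]

theorem Nat.Coprime.natCast_zmod_ne_zero {m n p : ℕ} (h : m.Coprime n) (hp : p ≠ 1)
    (hm : (m : ZMod p) = 0) : (n : ZMod p) ≠ 0 := by
  rw [ZMod.natCast_eq_zero_iff] at hm
  rw [Ne, ZMod.natCast_eq_zero_iff]
  exact fun hn => hp (Nat.eq_one_of_dvd_coprimes h hm hn)

theorem Nat.primeFactors_pairwise_coprime (n : ℕ) :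
    (n.primeFactors : Set ℕ).Pairwise Nat.Coprime :=
  fun _ hp _ hq hpq => (Nat.coprime_primes (Nat.prime_of_mem_primeFactors hp)
    (Nat.prime_of_mem_primeFactors hq)).2 hpq

theorem padicValNat_mul_of_not_dvd {p d m : ℕ} [Fact p.Prime] (hd : d ≠ 0) (hm : ¬p ∣ m) :
    padicValNat p (d * m) = padicValNat p d := by
  rw [padicValNat.mul hd (by rintro rfl; exact hm (dvd_zero p)),
    padicValNat.eq_zero_of_not_dvd hm, add_zero]

theorem two_dvd_mul_mul_of_padicValNat {d A B C : ℕ} (hd0 : d ≠ 0) (hd : 2 ∣ d)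
    (hval : (padicValNat 2 (d * A) = 0 ∧ padicValNat 2 (d * B) = 0 ∧
        padicValNat 2 (d * C) = 0) ∨
      ¬(padicValNat 2 (d * A) = padicValNat 2 (d * B) ∧
        padicValNat 2 (d * B) = padicValNat 2 (d * C))) :
    2 ∣ A * B * C := by
  by_contra h
  simp only [Nat.prime_two.dvd_mul, not_or] at h
  obtain ⟨⟨hA, hB⟩, hC⟩ := h
  rw [padicValNat_mul_of_not_dvd hd0 hA, padicValNat_mul_of_not_dvd hd0 hB,
    padicValNat_mul_of_not_dvd hd0 hC] at hval
  have := one_le_padicValNat_of_dvd hd0 hd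
  omega

theorem exists_zmod_add_mul_ne_zero_and_sub_mul_ne_zero {A B C p : ℕ} {x y : ℤ}
    (hxy : (A : ℤ) * x + B * y = 1) (hAC : A.Coprime C) (hBC : B.Coprime C) (hp : p.Prime)
    (h2 : p = 2 → 2 ∣ A * B * C) :
    ∃ k : ZMod p, (C * x + k * B : ZMod p) ≠ 0 ∧ (C * y - k * A : ZMod p) ≠ 0 := by
  have := Fact.mk hp
  refine exists_add_mul_ne_zero_and_sub_mul_ne_zero
    (by exact_mod_cast congrArg (Int.cast : ℤ → ZMod p) hxy)
    (hAC.natCast_zmod_ne_zero hp.ne_one) (hBC.natCast_zmod_ne_zero hp.ne_one) ?_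
  rcases eq_or_ne p 2 with rfl | hp2
  · exact .inr (by exact_mod_cast (ZMod.natCast_eq_zero_iff _ _).2 (h2 rfl))
  · left
    exact_mod_cast mt (ZMod.natCast_eq_zero_iff 2 p).1
      fun h => hp2 ((Nat.prime_dvd_prime_iff_eq hp Nat.prime_two).1 h)

theorem Nat.exists_pairwise_coprime_of_gcd_eq {a b c : ℕ} (ha : a ≠ 0)
    (hab : Nat.gcd a b = Nat.gcd b c) (hbc : Nat.gcd b c = Nat.gcd a c) :
    ∃ d A B C, d ≠ 0 ∧ a = d * A ∧ b = d * B ∧ c = d * C ∧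
      A.Coprime B ∧ A.Coprime C ∧ B.Coprime C := by
  obtain ⟨A, B, hAB, haA, hbB⟩ := Nat.exists_coprime a b
  set d := Nat.gcd a b
  have hd : d ≠ 0 := (Nat.gcd_pos_of_pos_left b (Nat.pos_of_ne_zero ha)).ne'
  obtain ⟨C, hcC⟩ : d ∣ c := hab ▸ Nat.gcd_dvd_right b c
  rw [mul_comm] at haA hbB
  have coprime_of_gcd {m n : ℕ} (h : Nat.gcd (d * m) (d * n) = d) : m.Coprime n :=
    Nat.eq_of_mul_eq_mul_left (Nat.pos_of_ne_zero hd) (by rw [← Nat.gcd_mul_left, h, mul_one])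
  refine ⟨d, A, B, C, hd, haA, hbB, hcC, hAB, coprime_of_gcd ?_, coprime_of_gcd ?_⟩
  · rw [← haA, ← hcC, ← hbc, ← hab]
  · rw [← hbB, ← hcC, ← hab]

theorem stmt_5_general (a b c : ℕ) (ha : 0 < a)
    (hgcd : Nat.gcd a b = Nat.gcd b c ∧ Nat.gcd b c = Nat.gcd a c)
    (hval : (padicValNat 2 a = 0 ∧ padicValNat 2 b = 0 ∧ padicValNat 2 c = 0) ∨
      ¬(padicValNat 2 a = padicValNat 2 b ∧ padicValNat 2 b = padicValNat 2 c)) :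
    ∃ a₁ b₂ : ℤ, a₁ * a + b * b₂ = c ∧ Int.gcd a₁ (b : ℤ) = 1 ∧
      Int.gcd (a : ℤ) b₂ = 1 := by
  obtain ⟨d, A, B, C, hd, rfl, rfl, rfl, hAB, hAC, hBC⟩ :=
    Nat.exists_pairwise_coprime_of_gcd_eq ha.ne' hgcd.1 hgcd.2
  obtain ⟨x, y, hxy⟩ := hAB.isCoprime
  replace hxy : (A : ℤ) * x + B * y = 1 := by linear_combination hxy
  have hlocal (p : ℕ) (hp : p ∈ d.primeFactors) :=
    exists_zmod_add_mul_ne_zero_and_sub_mul_ne_zero hxy hAC hBC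
      (Nat.prime_of_mem_primeFactors hp) fun h2 =>
        two_dvd_mul_mul_of_padicValNat hd (h2 ▸ Nat.dvd_of_mem_primeFactors hp) hval
  obtain ⟨k, hk⟩ := exists_intCast_forall_of_pairwise_coprime
    (fun p hp => (Nat.prime_of_mem_primeFactors hp).ne_zero) d.primeFactors_pairwise_coprime _
    hlocal
  set a₁ : ℤ := C * x + k * B
  set b₂ : ℤ := C * y - k * A
  have hsum : a₁ * A + B * b₂ = C := by linear_combination C * hxy
  refine ⟨a₁, b₂, by push_cast; linear_combination (d : ℤ) * hsum, ?_, ?_⟩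
  · rw [← Int.isCoprime_iff_gcd_eq_one, Nat.cast_mul]
    refine .mul_right (Int.isCoprime_of_forall_mem_primeFactors hd fun p hp => ?_) ?_
    · exact_mod_cast (hk p hp).1
    · have := hBC.symm.isCoprime
      rw [← hsum] at this
      exact this.of_add_mul_left_left.of_mul_left_left
  · rw [← Int.isCoprime_iff_gcd_eq_one, Nat.cast_mul]
    refine .mul_left (Int.isCoprime_of_forall_mem_primeFactors hd fun p hp => ?_).symm ?_
    · exact_mod_cast (hk p hp).2
    · have := hAC.symm.isCoprime
      rw [← hsum, add_comm] at this
      exact this.of_add_mul_right_left.of_mul_left_right.symm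

/-- Theorem 5.7: existence of a Bézout-type presentation with coprimality conditions. -/
theorem stmt_5 (a b c : ℕ) (ha : 0 < a) (hb : 0 < b) (hc : 0 < c)
    (hgcd : Nat.gcd a b = Nat.gcd b c ∧ Nat.gcd b c = Nat.gcd a c)
    (hval : (padicValNat 2 a = 0 ∧ padicValNat 2 b = 0 ∧ padicValNat 2 c = 0) ∨
      ¬(padicValNat 2 a = padicValNat 2 b ∧ padicValNat 2 b = padicValNat 2 c)) :
    ∃ a₁ b₂ : ℤ, a₁ * a + b * b₂ = c ∧ Int.gcd a₁ (b : ℤ) = 1 ∧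
      Int.gcd (a : ℤ) b₂ = 1 :=
  stmt_5_general a b c ha hgcd hval
end

section
/- Let a, b, c be positive integers with gcd(a,b) = gcd(b,c) = gcd(a,c), and suppose there exist integers a₁, b₂ with a₁·a + b·b₂ = c, gcd(a₁,b) = 1, gcd(a,b₂) = 1. Then Δ((a₁, b, a − b₂, b₂, 0, 1)) = (a, b, c), where Δ(a₁,a₂,b₁,b₂,c₁,c₂) = (b₁c₁+b₁c₂+b₂c₂, a₁c₁+a₂c₁+a₂c₂, a₁b₁+a₁b₂+a₂b₂), and moreover (a₁, b, a − b₂, b₂, 0, 1) lies in S = {tuples in ℤ⁶ with gcd(a₁,a₂) = gcd(b₁,b₂) = gcd(c₁,c₂) = 1}. -/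
theorem Delta_sub_zero_one (x y z w : ℤ) :
    Delta x y (z - w) w 0 1 = (z, y, x * z + y * w) := by
  simp only [Delta, Prod.mk.injEq]
  refine ⟨?_, ?_, ?_⟩ <;> ring

theorem stmt_6_general (a b c : ℕ)
    (a₁ b₂ : ℤ) (heq : a₁ * a + b * b₂ = c)
    (h1 : Int.gcd a₁ (b : ℤ) = 1) (h2 : Int.gcd (a : ℤ) b₂ = 1) :
    Delta a₁ (b : ℤ) ((a : ℤ) - b₂) b₂ 0 1 = ((a : ℤ), (b : ℤ), (c : ℤ)) ∧
    Int.gcd a₁ (b : ℤ) = 1 ∧ Int.gcd ((a : ℤ) - b₂) b₂ = 1 ∧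
    Int.gcd (0 : ℤ) (1 : ℤ) = 1 :=
  ⟨heq ▸ Delta_sub_zero_one a₁ b a b₂, h1, (Int.gcd_sub_self_left b₂ a).trans h2,
    Int.gcd_one_right 0⟩

/-- From a Bézout-type presentation one obtains an explicit tuple in S mapping to (a,b,c). -/
theorem stmt_6 (a b c : ℕ) (ha : 0 < a) (hb : 0 < b) (hc : 0 < c)
    (hgcd : Nat.gcd a b = Nat.gcd b c ∧ Nat.gcd b c = Nat.gcd a c)
    (a₁ b₂ : ℤ) (heq : a₁ * a + b * b₂ = c)
    (h1 : Int.gcd a₁ (b : ℤ) = 1) (h2 : Int.gcd (a : ℤ) b₂ = 1) :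
    Delta a₁ (b : ℤ) ((a : ℤ) - b₂) b₂ 0 1 = ((a : ℤ), (b : ℤ), (c : ℤ)) ∧
    Int.gcd a₁ (b : ℤ) = 1 ∧ Int.gcd ((a : ℤ) - b₂) b₂ = 1 ∧
    Int.gcd (0 : ℤ) (1 : ℤ) = 1 :=
  stmt_6_general a b c a₁ b₂ heq h1 h2
end

section
/- Let a, b, c be positive even integers with ν₂(a) = ν₂(b) = ν₂(c) (all three 2-adic valuations equal and ≥ 1). Then there is no tuple (a₁,a₂,b₁,b₂,c₁,c₂) of non-negative integers with gcd(a₁,a₂) = gcd(b₁,b₂) = gcd(c₁,c₂) = 1 such that a = b₁(c₁+c₂) + b₂c₂, b = a₁c₁ + a₂(c₁+c₂), and c = a₁(b₁+b₂) + a₂b₂. -/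
/-!
Write `a = 2^ℓ u`, `b = 2^ℓ v`, `c = 2^ℓ w` with `u, v, w` odd. With `x = (a₁,a₂)`, `y = (b₁,b₂)`,
`z = (c₁,c₂)` and `B(s,t) = s₁t₁ + s₁t₂ + s₂t₂`, the equations read `a = B(y,z)`, `b = B(z,x)`,
`c = B(x,y)`, and they imply `c₁ c + a₂ a = (b₁+b₂) b` and `(a₁+a₂) a = b₁ b + c₂ c`. Cancelling
`2^ℓ` and reducing mod 2 gives `c₁ + a₂ ≡ b₁ + b₂` and `a₁ + a₂ ≡ b₁ + c₂`, while `ℓ ≥ 1` makes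
`a, b, c` even. Coprimality says `x, y, z` are nonzero mod 2; over `𝔽₂` the vanishing of
`B(y,z), B(z,x), B(x,y)` then forces `y = σ x`, `z = σ² x` for `σ(s₁,s₂) = (s₁+s₂, s₁)`, and the
two congruences force `x = 0`.
-/

theorem padicValNat_two_pow_mul_odd {k u : ℕ} (hu : Odd u) :
    padicValNat 2 (2 ^ k * u) = k := by
  rw [padicValNat.mul (by positivity) hu.pos.ne', padicValNat.prime_pow,
    padicValNat.eq_zero_of_not_dvd hu.not_two_dvd_nat, add_zero]

theorem Nat.Coprime.not_even_and_even {x y : ℕ} (h : x.Coprime y) :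
    ¬ ((x : ZMod 2) = 0 ∧ (y : ZMod 2) = 0) := by
  simp only [ZMod.natCast_eq_zero_iff_even, even_iff_two_dvd]
  exact fun ⟨hx, hy⟩ => Nat.not_coprime_of_dvd_of_dvd one_lt_two hx hy h

theorem relations_of_mul_eq_delta {d u v w a₁ a₂ b₁ b₂ c₁ c₂ : ℕ} (hd : 0 < d)
    (ha : d * u = b₁ * (c₁ + c₂) + b₂ * c₂) (hb : d * v = a₁ * c₁ + a₂ * (c₁ + c₂))
    (hc : d * w = a₁ * (b₁ + b₂) + a₂ * b₂) :
    c₁ * w + a₂ * u = (b₁ + b₂) * v ∧ (a₁ + a₂) * u = b₁ * v + c₂ * w :=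
  ⟨Nat.eq_of_mul_eq_mul_left hd (by linear_combination c₁ * hc + a₂ * ha - (b₁ + b₂) * hb),
    Nat.eq_of_mul_eq_mul_left hd (by linear_combination (a₁ + a₂) * ha - b₁ * hb - c₂ * hc)⟩

set_option synthInstance.maxSize 2000 in
theorem ZMod.two_no_primitive_solution (a₁ a₂ b₁ b₂ c₁ c₂ : ZMod 2)
    (ha : ¬ (a₁ = 0 ∧ a₂ = 0)) (hb : ¬ (b₁ = 0 ∧ b₂ = 0)) (hc : ¬ (c₁ = 0 ∧ c₂ = 0))
    (hA : b₁ * (c₁ + c₂) + b₂ * c₂ = 0) (hB : a₁ * c₁ + a₂ * (c₁ + c₂) = 0)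
    (hC : a₁ * (b₁ + b₂) + a₂ * b₂ = 0)
    (h₁ : c₁ + a₂ = b₁ + b₂) (h₂ : a₁ + a₂ = b₁ + c₂) : False := by
  revert a₁ a₂ b₁ b₂ c₁ c₂
  decide

theorem not_two_pow_mul_odd_eq_delta {k u v w a₁ a₂ b₁ b₂ c₁ c₂ : ℕ} (hk : 1 ≤ k)
    (hu : Odd u) (hv : Odd v) (hw : Odd w)
    (hga : a₁.gcd a₂ = 1) (hgb : b₁.gcd b₂ = 1) (hgc : c₁.gcd c₂ = 1)
    (ha : 2 ^ k * u = b₁ * (c₁ + c₂) + b₂ * c₂) (hb : 2 ^ k * v = a₁ * c₁ + a₂ * (c₁ + c₂))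
    (hc : 2 ^ k * w = a₁ * (b₁ + b₂) + a₂ * b₂) : False := by
  obtain ⟨h₁, h₂⟩ := relations_of_mul_eq_delta (by positivity) ha hb hc
  have h2k : (2 : ZMod 2) ^ k = 0 := by
    rw [show (2 : ZMod 2) = 0 from rfl, zero_pow (by omega)]
  apply_fun (Nat.cast : ℕ → ZMod 2) at ha hb hc h₁ h₂
  push_cast [hu.natCast_zmod_two, hv.natCast_zmod_two, hw.natCast_zmod_two, mul_one]
    at ha hb hc h₁ h₂
  simp only [h2k] at ha hb hc
  exact ZMod.two_no_primitive_solution _ _ _ _ _ _ (Nat.Coprime.not_even_and_even hga)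
    (Nat.Coprime.not_even_and_even hgb) (Nat.Coprime.not_even_and_even hgc)
    ha.symm hb.symm hc.symm h₁ h₂

/-- If a, b, c are positive with equal 2-adic valuations ≥ 1, then (a,b,c) is not in
the image of S ∩ ℤ_{≥0}⁶ under Δ. -/
theorem stmt_7 (a b c : ℕ) (ha : 0 < a) (hb : 0 < b) (hc : 0 < c)
    (hℓ : 1 ≤ padicValNat 2 a)
    (hab : padicValNat 2 a = padicValNat 2 b)
    (hbc : padicValNat 2 b = padicValNat 2 c) :
    ¬ ∃ a₁ a₂ b₁ b₂ c₁ c₂ : ℕ,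
        Nat.gcd a₁ a₂ = 1 ∧ Nat.gcd b₁ b₂ = 1 ∧ Nat.gcd c₁ c₂ = 1 ∧
        a = b₁*(c₁+c₂) + b₂*c₂ ∧ b = a₁*c₁ + a₂*(c₁+c₂) ∧
        c = a₁*(b₁+b₂) + a₂*b₂ := by
  rintro ⟨a₁, a₂, b₁, b₂, c₁, c₂, hga, hgb, hgc, hA, hB, hC⟩
  obtain ⟨k, u, hu, rfl⟩ := Nat.exists_eq_two_pow_mul_odd ha.ne'
  obtain ⟨l, v, hv, rfl⟩ := Nat.exists_eq_two_pow_mul_odd hb.ne'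
  obtain ⟨m, w, hw, rfl⟩ := Nat.exists_eq_two_pow_mul_odd hc.ne'
  rw [padicValNat_two_pow_mul_odd hu] at hℓ hab
  rw [padicValNat_two_pow_mul_odd hv] at hab hbc
  rw [padicValNat_two_pow_mul_odd hw] at hbc
  subst hab hbc
  exact not_two_pow_mul_odd_eq_delta hℓ hu hv hw hga hgb hgc hA hB hC
end

section
/- Suppose a, b, c are even natural numbers and (a₁,a₂,b₁,b₂,c₁,c₂) are integers with gcd(a₁,a₂) = gcd(b₁,b₂) = gcd(c₁,c₂) = 1, satisfying a = b₁(c₁+c₂) + b₂c₂, b = a₁c₁ + a₂(c₁+c₂), c = a₁(b₁+b₂) + a₂b₂. Then c₁ + c₂ ≡ b₂ ≡ a₁ (mod 2) and c₁ ≡ a₂ ≡ b₁ + b₂ (mod 2). -/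
/-! Modulo 2 the three equations say `Q(x, y) = Q(y, z) = Q(z, x) = 0` for the form
`Q(u, v) = u₁v₁ + u₁v₂ + u₂v₂` on `𝔽₂²`, where `x = (a₁, a₂)`, `y = (b₁, b₂)`, `z = (c₁, c₂)`;
coprimality makes these three vectors nonzero. For `u ≠ 0` the only nonzero `v` with
`Q(u, v) = 0` is `(u₁ + u₂, u₁)`, so each of `y, z, x` is determined by its predecessor in the
cycle, and the claimed congruences are read off. -/

lemma ZMod.not_both_intCast_eq_zero_of_gcd_eq_one {n : ℕ} (hn : n ≠ 1) {x y : ℤ}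
    (h : Int.gcd x y = 1) : ¬((x : ZMod n) = 0 ∧ (y : ZMod n) = 0) := by
  rintro ⟨hx, hy⟩
  rw [ZMod.intCast_zmod_eq_zero_iff_dvd] at hx hy
  have hdvd := Int.dvd_coe_gcd hx hy
  rw [h] at hdvd
  exact hn (Nat.dvd_one.mp (by exact_mod_cast hdvd))

lemma ZMod.two_eq_of_cycle_form_eq_zero {u₁ u₂ v₁ v₂ : ZMod 2} (hu : ¬(u₁ = 0 ∧ u₂ = 0))
    (hv : ¬(v₁ = 0 ∧ v₂ = 0)) (h : u₁ * v₁ + u₁ * v₂ + u₂ * v₂ = 0) :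
    v₁ = u₁ + u₂ ∧ v₂ = u₁ := by
  revert u₁ u₂ v₁ v₂
  decide

/-- Parity congruences forced by the three bilinear equations when a, b, c are even. -/
theorem stmt_8 (a b c a₁ a₂ b₁ b₂ c₁ c₂ : ℤ)
    (hA : Even a) (hB : Even b) (hC : Even c)
    (ga : Int.gcd a₁ a₂ = 1) (gb : Int.gcd b₁ b₂ = 1) (gc : Int.gcd c₁ c₂ = 1)
    (ea : a = b₁*(c₁+c₂) + b₂*c₂) (eb : b = a₁*c₁ + a₂*(c₁+c₂))
    (ec : c = a₁*(b₁+b₂) + a₂*b₂) :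
    (c₁ + c₂) % 2 = b₂ % 2 ∧ b₂ % 2 = a₁ % 2 ∧
    c₁ % 2 = a₂ % 2 ∧ a₂ % 2 = (b₁ + b₂) % 2 := by
  have hx := ZMod.not_both_intCast_eq_zero_of_gcd_eq_one (by decide : 2 ≠ 1) ga
  have hy := ZMod.not_both_intCast_eq_zero_of_gcd_eq_one (by decide : 2 ≠ 1) gb
  have hz := ZMod.not_both_intCast_eq_zero_of_gcd_eq_one (by decide : 2 ≠ 1) gc
  have hQxy := ZMod.intCast_eq_zero_iff_even.mpr hC
  have hQyz := ZMod.intCast_eq_zero_iff_even.mpr hA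
  have hQzx := ZMod.intCast_eq_zero_iff_even.mpr hB
  rw [ec] at hQxy; rw [ea] at hQyz; rw [eb] at hQzx
  push_cast at hQxy hQyz hQzx
  obtain ⟨-, hy₂⟩ := ZMod.two_eq_of_cycle_form_eq_zero hx hy (by linear_combination hQxy)
  obtain ⟨hz₁, -⟩ := ZMod.two_eq_of_cycle_form_eq_zero hy hz (by linear_combination hQyz)
  obtain ⟨hx₁, hx₂⟩ := ZMod.two_eq_of_cycle_form_eq_zero hz hx (by linear_combination hQzx)
  have hmod (m n : ℤ) : (m : ZMod 2) = n → m % 2 = n % 2 :=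
    (ZMod.intCast_eq_intCast_iff' m n 2).mp
  refine ⟨hmod _ _ ?_, hmod _ _ hy₂, hmod _ _ hx₂.symm, hmod _ _ ?_⟩ <;> push_cast
  · rw [← hx₁, hy₂]
  · rw [← hz₁, hx₂]
end

section
/- Let R ⊆ ℂ with M := inf{|x| : x ∈ R, x ≠ 0} > 0. Consider an array row pair (x₁, …, xₙ) and (y₁, …, yₙ) of nonzero elements of R together with boundary values d_j, d_{j+1}, … all of absolute value at most P, with P ≥ 1, satisfying the frieze relations x₁y₁ − d_{j+1}x₂ = d_j d_{j+2} and x_k y_k − x_{k+1} y_{k−1} = d_j d_{j+k+1} for 2 ≤ k ≤ n (with x_{n+1} = d_{j−1}). Then |x₁| ≤ P²(PM + (n−1)P² + M)/M². -/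
/-! Put `r k := |x k| / |y (k - 1)|`. Dividing the frieze relation
`x k y k = x (k+1) y (k-1) + d j d (j+k+1)` by `y k y (k-1)` gives `r k ≤ r (k+1) + P²/M²`,
and `r (n+1) = |d (j-1)| / |y n| ≤ P/M`; telescoping bounds `r 2`, and the first relation
`x 1 y 1 = d (j+1) x 2 + d j d (j+2)` turns this into a bound on `|x 1|`. -/

theorem le_add_nsmul_of_le_add {α : Type*} [AddCommGroup α] [PartialOrder α]
    [IsOrderedAddMonoid α] {r : ℕ → α} {c : α} {a b : ℕ} (hab : a ≤ b)
    (h : ∀ k, a ≤ k → k < b → r k ≤ r (k + 1) + c) : r a ≤ r b + (b - a) • c := by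
  induction b, hab using Nat.le_induction with
  | base => simp
  | succ b hab ih =>
    calc r a ≤ r b + (b - a) • c := ih fun k hak hkb => h k hak (by omega)
      _ ≤ r (b + 1) + c + (b - a) • c := by gcongr; exact h b hab (by omega)
      _ = r (b + 1) + (b + 1 - a) • c := by rw [Nat.sub_add_comm hab, succ_nsmul]; abel

theorem norm_mul_le_norm_mul_add_sq {𝕜 : Type*} [NormedDivisionRing 𝕜] {a b c e f g : 𝕜}
    {P : ℝ} (h : a * b - c * e = f * g) (hf : ‖f‖ ≤ P) (hg : ‖g‖ ≤ P) :
    ‖a‖ * ‖b‖ ≤ ‖c‖ * ‖e‖ + P ^ 2 := by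
  calc ‖a‖ * ‖b‖ = ‖c * e + f * g‖ := by rw [← norm_mul, sub_eq_iff_eq_add'.mp h]
    _ ≤ ‖c * e‖ + ‖f * g‖ := norm_add_le _ _
    _ ≤ ‖c‖ * ‖e‖ + P ^ 2 := by
      rw [norm_mul, norm_mul, sq]; gcongr; exact (norm_nonneg f).trans hf

theorem div_le_div_add_div_sq {M Q a b u v : ℝ} (hM : 0 < M) (hu : M ≤ u) (hv : M ≤ v)
    (hQ : 0 ≤ Q) (h : a * u ≤ b * v + Q) : a / v ≤ b / u + Q / M ^ 2 := by
  have hu0 : 0 < u := hM.trans_le hu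
  have hv0 : 0 < v := hM.trans_le hv
  calc a / v = a * u / (u * v) := by field_simp
    _ ≤ (b * v + Q) / (u * v) := by gcongr
    _ = b / u + Q / (u * v) := by field_simp
    _ ≤ b / u + Q / M ^ 2 := by gcongr; rw [sq]; exact mul_le_mul hu hv hM.le hu0.le

theorem norm_div_norm_le_of_frieze {M P : ℝ} (hM : 0 < M) {n : ℕ} {j : ℤ}
    {x y : ℕ → ℂ} {d : ℤ → ℂ} (hMy : ∀ k, 1 ≤ k → k ≤ n → M ≤ ‖y k‖)
    (hdP : ∀ i : ℤ, ‖d i‖ ≤ P) (hxlast : x (n + 1) = d (j - 1))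
    (hrel : ∀ k : ℕ, 2 ≤ k → k ≤ n →
      x k * y k - x (k + 1) * y (k - 1) = d j * d (j + (k : ℤ) + 1)) :
    ∀ k, 2 ≤ k → k ≤ n + 1 →
      ‖x k‖ / ‖y (k - 1)‖ ≤ P / M + ((n + 1 - k : ℕ) : ℝ) * (P ^ 2 / M ^ 2) := by
  intro k hk2 hkn
  have hlast : ‖x (n + 1)‖ / ‖y n‖ ≤ P / M := by
    rw [hxlast]
    exact div_le_div₀ ((norm_nonneg _).trans (hdP 0)) (hdP _) hM (hMy n (by omega) le_rfl)
  have hstep : ∀ i, k ≤ i → i < n + 1 →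
      ‖x i‖ / ‖y (i - 1)‖ ≤ ‖x (i + 1)‖ / ‖y (i + 1 - 1)‖ + P ^ 2 / M ^ 2 := fun i hki hin =>
    div_le_div_add_div_sq hM (hMy i (by omega) (by omega)) (hMy (i - 1) (by omega) (by omega))
      (sq_nonneg P) (norm_mul_le_norm_mul_add_sq (hrel i (by omega) (by omega)) (hdP _) (hdP _))
  calc ‖x k‖ / ‖y (k - 1)‖
      ≤ ‖x (n + 1)‖ / ‖y (n + 1 - 1)‖ + (n + 1 - k) • (P ^ 2 / M ^ 2) :=
        le_add_nsmul_of_le_add (r := fun i => ‖x i‖ / ‖y (i - 1)‖) hkn hstep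
    _ ≤ P / M + ((n + 1 - k : ℕ) : ℝ) * (P ^ 2 / M ^ 2) := by
        rw [nsmul_eq_mul, Nat.add_sub_cancel]; gcongr

theorem stmt_16_general (R : Set ℂ) (M P : ℝ) (hM : 0 < M)
    (hMinf : ∀ z ∈ R, z ≠ 0 → M ≤ ‖z‖)
    (n : ℕ) (hn : 1 ≤ n) (j : ℤ)
    (x y : ℕ → ℂ) (d : ℤ → ℂ)
    (hy : ∀ k, 1 ≤ k → k ≤ n → y k ∈ R ∧ y k ≠ 0)
    (hP : 1 ≤ P) (hdP : ∀ i : ℤ, ‖d i‖ ≤ P)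
    (hxlast : x (n + 1) = d (j - 1))
    (hrel1 : x 1 * y 1 - d (j + 1) * x 2 = d j * d (j + 2))
    (hrel : ∀ k : ℕ, 2 ≤ k → k ≤ n →
      x k * y k - x (k + 1) * y (k - 1) = d j * d (j + (k : ℤ) + 1)) :
    ‖x 1‖ ≤ P ^ 2 * (P * M + ((n : ℝ) - 1) * P ^ 2 + M) / M ^ 2 := by
  have hMy : ∀ k, 1 ≤ k → k ≤ n → M ≤ ‖y k‖ := fun k h1 h2 =>
    hMinf _ (hy k h1 h2).1 (hy k h1 h2).2
  have hr2 := norm_div_norm_le_of_frieze hM hMy hdP hxlast hrel 2 le_rfl (by omega)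
  rw [show ((n + 1 - 2 : ℕ) : ℝ) = n - 1 by rw [Nat.cast_sub (by omega)]; push_cast; ring] at hr2
  have hx1 : ‖x 1‖ * ‖y 1‖ ≤ ‖d (j + 1)‖ * ‖x 2‖ + P ^ 2 :=
    norm_mul_le_norm_mul_add_sq hrel1 (hdP _) (hdP _)
  have hy1 : M ≤ ‖y 1‖ := hMy 1 le_rfl hn
  have hy1pos : 0 < ‖y 1‖ := hM.trans_le hy1
  have hP0 : 0 ≤ P := by linarith
  have hn1 : (0 : ℝ) ≤ n - 1 := by rw [sub_nonneg]; exact_mod_cast hn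
  calc ‖x 1‖ ≤ (P * ‖x 2‖ + P ^ 2) / ‖y 1‖ := by
        rw [le_div_iff₀ hy1pos]
        exact hx1.trans (by gcongr; exact hdP _)
    _ = P * (‖x 2‖ / ‖y 1‖) + P ^ 2 / ‖y 1‖ := by ring
    _ ≤ P * (P / M + (n - 1) * (P ^ 2 / M ^ 2)) + P ^ 2 / M := by gcongr
    _ = (P ^ 2 * M + (n - 1) * P ^ 3 + P ^ 2 * M) / M ^ 2 := by field_simp
    _ ≤ P ^ 2 * (P * M + (n - 1) * P ^ 2 + M) / M ^ 2 := by
        gcongr ?_ / _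
        have h23 : P ^ 2 ≤ P ^ 3 := pow_le_pow_right₀ hP (by norm_num)
        have h34 : P ^ 3 ≤ P ^ 4 := pow_le_pow_right₀ hP (by norm_num)
        nlinarith [mul_le_mul_of_nonneg_left h34 hn1, mul_le_mul_of_nonneg_right h23 hM.le]

/-- Lemma 6.1: bound on the quiddity-cycle entry |x₁| of a frieze pattern
with coefficients with nonzero entries in R, in terms of M and P. -/
theorem stmt_16 (R : Set ℂ) (M P : ℝ) (hM : 0 < M)
    (hMinf : ∀ z ∈ R, z ≠ 0 → M ≤ ‖z‖)
    (n : ℕ) (hn : 1 ≤ n) (j : ℤ)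
    (x y : ℕ → ℂ) (d : ℤ → ℂ)
    (hx : ∀ k, 1 ≤ k → k ≤ n → x k ∈ R ∧ x k ≠ 0)
    (hy : ∀ k, 1 ≤ k → k ≤ n → y k ∈ R ∧ y k ≠ 0)
    (hd : ∀ i : ℤ, d i ∈ R ∧ d i ≠ 0)
    (hP : 1 ≤ P) (hdP : ∀ i : ℤ, ‖d i‖ ≤ P)
    (hxlast : x (n + 1) = d (j - 1))
    (hrel1 : x 1 * y 1 - d (j + 1) * x 2 = d j * d (j + 2))
    (hrel : ∀ k : ℕ, 2 ≤ k → k ≤ n →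
      x k * y k - x (k + 1) * y (k - 1) = d j * d (j + (k : ℤ) + 1)) :
    ‖x 1‖ ≤ P ^ 2 * (P * M + ((n : ℝ) - 1) * P ^ 2 + M) / M ^ 2 :=
  stmt_16_general R M P hM hMinf n hn j x y d hy hP hdP hxlast hrel1 hrel
end

section
/- Let d₀, …, d_{n+2} be nonzero complex numbers (indices mod n+3) and c₀, …, c_{n+2} complex numbers, and for each k let μ_k = [[0, −d_k/d_{k−1}],[1, c_{k−1}/d_{k−1}]]. Suppose (c_{i,j}) is a tame frieze pattern with coefficients of height n with c_{i,i+1} = d_i and c_{i,i+2} = c_i. Then the product μ₁ μ₂ ⋯ μ_{n+3} equals −Id (the negative of the 2×2 identity matrix). -/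
open Matrix

/-!
Each row of a tame frieze satisfies the three-term linear recurrence whose companion matrices
are the `μ_k`: the local condition gives it for the entries next to the diagonal, and the
vanishing adjacent `3 × 3` minors propagate it across the strip. So the `2 × 2` window `W_j` of
rows `0, 1` and columns `j, j + 1` satisfies `W_j μ_{j+1} = W_{j+1}`, and the product telescopes to
`W_0 μ₁ ⋯ μ_{n+3} = -W_0`, using the boundary values forced by the local condition
(`c_{i+1,i} = -d_i`, `c_{i+1,n+i+3} = d_i`, `d_{i+n+3} = d_i`). Since `W_0 = d_0 [[0, 1], [-1, 0]]`
is invertible, the product is `-1`.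
-/

namespace Frieze

variable {n : ℕ} {c : ℤ → ℤ → ℂ}

def LocalDetCondition (n : ℕ) (c : ℤ → ℤ → ℂ) : Prop :=
  ∀ i j : ℤ, i ≤ j → j ≤ i + n + 2 →
    c i j * c (i + 1) (j + 1) - c i (j + 1) * c (i + 1) j =
      c (i + 1) (i + n + 3) * c j (j + 1)

def IsTame (n : ℕ) (c : ℤ → ℤ → ℂ) : Prop :=
  ∀ i j : ℤ, i + 2 ≤ j → j + 2 ≤ i + n + 3 →
    Matrix.det
      (!![c i j, c i (j+1), c i (j+2);
          c (i+1) j, c (i+1) (j+1), c (i+1) (j+2);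
          c (i+2) j, c (i+2) (j+1), c (i+2) (j+2)] : Matrix (Fin 3) (Fin 3) ℂ) = 0

/-- The recurrence in row `i` whose companion matrix at column `k` is `mu c k`. -/
def RowRecurrence (c : ℤ → ℤ → ℂ) (i k : ℤ) : Prop :=
  c k (k + 1) * c i (k + 2) = c k (k + 2) * c i (k + 1) - c (k + 1) (k + 2) * c i k

/-- The paper's `μ_{k+1}`. -/
noncomputable def mu (c : ℤ → ℤ → ℂ) (k : ℤ) : Matrix (Fin 2) (Fin 2) ℂ :=
  !![0, -c (k + 1) (k + 2) / c k (k + 1); 1, c k (k + 2) / c k (k + 1)]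

def window (c : ℤ → ℤ → ℂ) (i j : ℤ) : Matrix (Fin 2) (Fin 2) ℂ :=
  !![c i j, c i (j + 1); c (i + 1) j, c (i + 1) (j + 1)]

theorem end_eq_boundary (hzero : ∀ i, c i i = 0) (hbound : ∀ i, c i (i + 1) ≠ 0)
    (hloc : LocalDetCondition n c) (i : ℤ) : c (i + 1) (i + n + 3) = c i (i + 1) := by
  have h := hloc i (i + 1) (by omega) (by omega)
  rw [hzero (i + 1), mul_zero, sub_zero] at h
  exact (mul_right_cancel₀ (hbound (i + 1)) h).symm

theorem below_diag_eq_neg_boundary (hzero : ∀ i, c i i = 0) (hbound : ∀ i, c i (i + 1) ≠ 0)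
    (hloc : LocalDetCondition n c) (i : ℤ) : c (i + 1) i = -c i (i + 1) := by
  have h := hloc i i le_rfl (by omega)
  rw [hzero i, end_eq_boundary hzero hbound hloc i] at h
  exact mul_left_cancel₀ (hbound i) (by linear_combination -h)

theorem penultimate_eq_boundary (hzero : ∀ i, c i i = 0) (hzero' : ∀ i : ℤ, c i (i + n + 3) = 0)
    (hbound : ∀ i, c i (i + 1) ≠ 0) (hloc : LocalDetCondition n c) (i : ℤ) :
    c i (i + n + 2) = c (i + n + 2) (i + n + 3) := by
  have h := hloc i (i + n + 2) (by omega) (by omega)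
  rw [show i + n + 2 + 1 = i + n + 3 by ring, hzero' i, end_eq_boundary hzero hbound hloc i] at h
  exact mul_left_cancel₀ (hbound i) (by linear_combination h)

theorem boundary_periodic (hzero : ∀ i, c i i = 0) (hzero' : ∀ i : ℤ, c i (i + n + 3) = 0)
    (hbound : ∀ i, c i (i + 1) ≠ 0) (hloc : LocalDetCondition n c) (i : ℤ) :
    c (i + n + 3) (i + n + 4) = c i (i + 1) := by
  have h := penultimate_eq_boundary hzero hzero' hbound hloc (i + 1)
  rw [show i + 1 + n + 2 = i + n + 3 by ring, show i + 1 + n + 3 = i + n + 4 by ring,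
    end_eq_boundary hzero hbound hloc i] at h
  exact h.symm

/-- Expanding the vanishing minor along row `i`: by the recurrence in rows `i + 1` and `i + 2`,
their cross product is `e * c k (k + 1)` times the coefficient vector of the recurrence, so
row `i` is orthogonal to that vector as well. -/
theorem RowRecurrence.of_next_rows {i k : ℤ} {e : ℂ} (h₁ : RowRecurrence c (i + 1) k)
    (h₂ : RowRecurrence c (i + 2) k)
    (hminor : c (i + 1) k * c (i + 2) (k + 1) - c (i + 1) (k + 1) * c (i + 2) k =
      e * c k (k + 1))
    (he : e ≠ 0) (hk : c k (k + 1) ≠ 0)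
    (hdet : Matrix.det
      (!![c i k, c i (k+1), c i (k+2);
          c (i+1) k, c (i+1) (k+1), c (i+1) (k+2);
          c (i+2) k, c (i+2) (k+1), c (i+2) (k+2)] : Matrix (Fin 3) (Fin 3) ℂ) = 0) :
    RowRecurrence c i k := by
  unfold RowRecurrence at *
  simp only [det_fin_three, of_apply, cons_val', cons_val_zero, cons_val_fin_one, cons_val_one,
    cons_val] at hdet
  have h : (c k (k + 1) * c i (k + 2) -
      (c k (k + 2) * c i (k + 1) - c (k + 1) (k + 2) * c i k)) * (e * c k (k + 1)) = 0 := by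
    linear_combination c k (k + 1) * hdet
      + (c i k * c (i + 2) (k + 1) - c i (k + 1) * c (i + 2) k) * h₁
      - (c i k * c (i + 1) (k + 1) - c i (k + 1) * c (i + 1) k) * h₂
      - (c k (k + 1) * c i (k + 2) - c k (k + 2) * c i (k + 1) + c (k + 1) (k + 2) * c i k)
        * hminor
  exact sub_eq_zero.mp ((mul_eq_zero.mp h).resolve_right (mul_ne_zero he hk))

theorem rowRecurrence (hzero : ∀ i, c i i = 0) (hbound : ∀ i, c i (i + 1) ≠ 0)
    (hloc : LocalDetCondition n c) (htame : IsTame n c) {i k : ℤ} (hik : i ≤ k + 1)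
    (hki : k + 1 ≤ i + n + 2) : RowRecurrence c i k := by
  obtain ⟨m, hm⟩ : ∃ m : ℕ, i + m = k + 1 := ⟨(k + 1 - i).toNat, by omega⟩
  replace hki : m ≤ n + 2 := by omega
  clear hik
  induction m using Nat.strong_induction_on generalizing i with
  | _ m ih =>
    match m, ih with
    | 0, _ =>
      obtain rfl : i = k + 1 := by simpa using hm
      rw [RowRecurrence, hzero, below_diag_eq_neg_boundary hzero hbound hloc k]
      ring
    | 1, _ =>
      obtain rfl : i = k := by simpa using hm
      rw [RowRecurrence, hzero]
      ring
    | 2, _ =>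
      obtain rfl : k = i + 1 := by push_cast at hm; omega
      have h := hloc i (i + 2) (by omega) (by omega)
      rw [end_eq_boundary hzero hbound hloc i] at h
      rw [RowRecurrence, show i + 1 + 1 = i + 2 by ring, show i + 1 + 2 = i + 2 + 1 by ring]
      linear_combination -h
    | m + 3, ih =>
      have h₁ := ih (m + 2) (by omega) (i := i + 1) (by push_cast at hm ⊢; omega) (by omega)
      have h₂ := ih (m + 1) (by omega) (i := i + 2) (by push_cast at hm ⊢; omega) (by omega)
      have hminor := hloc (i + 1) k (by push_cast at hm; omega) (by push_cast at hm; omega)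
      rw [end_eq_boundary hzero hbound hloc (i + 1), show i + 1 + 1 = i + 2 by ring] at hminor
      have he : c (i + 1) (i + 2) ≠ 0 := by simpa [add_assoc] using hbound (i + 1)
      exact h₁.of_next_rows h₂ hminor he (hbound k)
        (htame i k (by push_cast at hm; omega) (by push_cast at hm; omega))

theorem RowRecurrence.mu_entry {i j : ℤ} (h : RowRecurrence c i j) (hj : c j (j + 1) ≠ 0) :
    c i j * (-c (j + 1) (j + 2) / c j (j + 1)) + c i (j + 1) * (c j (j + 2) / c j (j + 1)) =
      c i (j + 2) := by
  rw [RowRecurrence] at h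
  field_simp
  linear_combination -h

theorem window_mul_mu {i j : ℤ} (h₀ : RowRecurrence c i j) (h₁ : RowRecurrence c (i + 1) j)
    (hj : c j (j + 1) ≠ 0) : window c i j * mu c j = window c i (j + 1) := by
  rw [window, window, mu, mul_fin_two, h₀.mu_entry hj, h₁.mu_entry hj, add_assoc j 1 1,
    one_add_one_eq_two]
  simp

theorem window_last_mul_mu (hzero : ∀ i, c i i = 0) (hzero' : ∀ i : ℤ, c i (i + n + 3) = 0)
    (hbound : ∀ i, c i (i + 1) ≠ 0) (hloc : LocalDetCondition n c) (htame : IsTame n c)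
    (i : ℤ) : window c i (i + n + 2) * mu c (i + n + 2) = -window c i i := by
  have hrec : RowRecurrence c (i + 1) (i + n + 2) :=
    rowRecurrence hzero hbound hloc htame (by omega) (by omega)
  have h₀ : c i (i + n + 2 + 1) = 0 := by rw [← hzero' i]; ring_nf
  have h₁ : c i (i + n + 2) = c (i + n + 2) (i + n + 2 + 1) := by
    rw [penultimate_eq_boundary hzero hzero' hbound hloc i]; ring_nf
  have h₂ : c (i + n + 2 + 1) (i + n + 2 + 2) = c i (i + 1) := by
    rw [← boundary_periodic hzero hzero' hbound hloc i]; ring_nf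
  have h₃ : c (i + 1) (i + n + 2 + 1) = c i (i + 1) := by
    rw [← end_eq_boundary hzero hbound hloc i]; ring_nf
  have h₄ : c (i + 1) (i + n + 2 + 2) = 0 := by rw [← hzero' (i + 1)]; ring_nf
  rw [window, window, mu, mul_fin_two, hrec.mu_entry (hbound _), h₀, h₁, h₂, h₃, h₄,
    hzero, hzero, below_diag_eq_neg_boundary hzero hbound hloc i]
  ext r s
  fin_cases r <;> fin_cases s <;> simp [mul_div_assoc', neg_div, mul_div_cancel_left₀ _ (hbound _)]

theorem window_mul_prod_mu (hzero : ∀ i, c i i = 0) (hbound : ∀ i, c i (i + 1) ≠ 0)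
    (hloc : LocalDetCondition n c) (htame : IsTame n c) (i : ℤ) {m : ℕ} (hm : m ≤ n + 2) :
    window c i i * ((List.range m).map fun k : ℕ => mu c (i + k)).prod = window c i (i + m) := by
  induction m with
  | zero => simp
  | succ m ih =>
    have h₀ : RowRecurrence c i (i + m) :=
      rowRecurrence hzero hbound hloc htame (by omega) (by omega)
    have h₁ : RowRecurrence c (i + 1) (i + m) :=
      rowRecurrence hzero hbound hloc htame (by omega) (by omega)
    rw [List.range_succ, List.map_append, List.prod_append, List.map_singleton,
      List.prod_singleton, ← mul_assoc, ih (by omega), window_mul_mu h₀ h₁ (hbound _)]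
    push_cast
    ring_nf

theorem isUnit_window_self (hzero : ∀ i, c i i = 0) (hbound : ∀ i, c i (i + 1) ≠ 0)
    (hloc : LocalDetCondition n c) (i : ℤ) : IsUnit (window c i i) := by
  rw [isUnit_iff_isUnit_det, window, det_fin_two_of, hzero, hzero,
    below_diag_eq_neg_boundary hzero hbound hloc i, isUnit_iff_ne_zero]
  simpa using hbound i

end Frieze

/-- Corollary 2.9(2): for a tame frieze pattern with coefficients of height n,
the product of the μ-matrices μ₁ ⋯ μ_{n+3} equals −Id. -/
theorem stmt_17 (n : ℕ) (c : ℤ → ℤ → ℂ)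
    (hzero1 : ∀ i : ℤ, c i i = 0)
    (hzero2 : ∀ i : ℤ, c i (i + n + 3) = 0)
    (hbound : ∀ i : ℤ, c i (i + 1) ≠ 0)
    (hloc : ∀ i j : ℤ, i ≤ j → j ≤ i + n + 2 →
      c i j * c (i + 1) (j + 1) - c i (j + 1) * c (i + 1) j =
        c (i + 1) (i + n + 3) * c j (j + 1))
    (htame : ∀ i j : ℤ, i + 2 ≤ j → j + 2 ≤ i + n + 3 →
      Matrix.det
        (!![c i j, c i (j+1), c i (j+2);
            c (i+1) j, c (i+1) (j+1), c (i+1) (j+2);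
            c (i+2) j, c (i+2) (j+1), c (i+2) (j+2)] : Matrix (Fin 3) (Fin 3) ℂ) = 0) :
    (((List.range (n + 3)).map (fun k : ℕ =>
        (!![0, -(c ((k : ℤ) + 1) ((k : ℤ) + 2)) / (c (k : ℤ) ((k : ℤ) + 1));
            1, (c (k : ℤ) ((k : ℤ) + 2)) / (c (k : ℤ) ((k : ℤ) + 1))] :
          Matrix (Fin 2) (Fin 2) ℂ))).prod) = -1 := by
  have hfirst := Frieze.window_mul_prod_mu hzero1 hbound hloc htame 0 (m := n + 2) le_rfl
  have hlast := Frieze.window_last_mul_mu hzero1 hzero2 hbound hloc htame 0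
  simp only [zero_add, Nat.cast_add, Nat.cast_ofNat] at hfirst hlast
  change ((List.range (n + 2 + 1)).map fun k : ℕ => Frieze.mu c k).prod = -1
  refine (Frieze.isUnit_window_self hzero1 hbound hloc 0).mul_left_cancel ?_
  rw [List.range_succ, List.map_append, List.prod_append, List.map_singleton,
    List.prod_singleton, ← mul_assoc, hfirst, Nat.cast_add, Nat.cast_ofNat, hlast, mul_neg_one]
end
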